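/- With the same setup, p*(y1 ≻ y2) ≥ 1/2 where y1 maximizes π_fp and y2 maximizes π_q. -/

import Mathlib

noncomputable def sigma (z : ℝ) : ℝ := 1 / (1 + Real.exp (-z))

lemma one_half_le_sigma {z : ℝ} (hz : 0 ≤ z) : (1 : ℝ) / 2 ≤ sigma z := by
  have hexp : Real.exp (-z) ≤ 1 := Real.exp_le_one_iff.mpr (neg_nonpos.mpr hz)
  unfold sigma
  exact one_div_le_one_div_of_le (by positivity) (by linarith)

theorem stmt_5_general {Y : Type*}
    (pfp pq : Y → ℝ) (hfp : ∀ y, 0 < pfp y) (hq : ∀ y, 0 < pq y)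
    (β : ℝ) (hβ : 0 < β) (y1 y2 : Y)
    (h1 : ∀ y : Y, pfp y ≤ pfp y1) (h2 : ∀ y : Y, pq y ≤ pq y2) :
    (1 : ℝ) / 2 ≤
      sigma (β * (Real.log (pfp y1 / pq y1) - Real.log (pfp y2 / pq y2))) := by
  have hratio : pfp y2 / pq y2 ≤ pfp y1 / pq y1 :=
    div_le_div₀ (hfp y1).le (h1 y2) (hq y1) (h2 y1)
  have hlog : Real.log (pfp y2 / pq y2) ≤ Real.log (pfp y1 / pq y1) :=
    Real.log_le_log (div_pos (hfp y2) (hq y2)) hratio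
  exact one_half_le_sigma (mul_nonneg hβ.le (sub_nonneg.mpr hlog))

theorem stmt_5 {Y : Type*} [Fintype Y] [Nonempty Y]
    (pfp pq : Y → ℝ) (hfp : ∀ y, 0 < pfp y) (hq : ∀ y, 0 < pq y)
    (β : ℝ) (hβ : 0 < β) (y1 y2 : Y)
    (h1 : ∀ y : Y, pfp y ≤ pfp y1) (h2 : ∀ y : Y, pq y ≤ pq y2) :
    (1 : ℝ) / 2 ≤
      sigma (β * (Real.log (pfp y1 / pq y1) - Real.log (pfp y2 / pq y2))) :=
  stmt_5_general pfp pq hfp hq β hβ y1 y2 h1 h2
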